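/- arXiv:2605.29624 — 5 statements merged into one kernel-verified Lean document; each statement's English description precedes it below -/
import Mathlib

section
/- Let a, b be nonnegative integers with a < b ≤ 2a and a < p, p prime, and λ an element of a field of characteristic p. Then the sum over ℓ from b-a to a of C(a, ℓ)·C(a, b - ℓ)·λ^{a - b + ℓ} equals C(a, 2a - b)·G^{(2a-b)}(-a, b - 2a, 1 + b - a | λ). -/
/-- The Pochhammer symbol `(x;ℓ) = x(x+1)⋯(x+ℓ-1)` in a field `K`. -/
noncomputable def poch {K : Type*} [Field K] (x : K) (ℓ : ℕ) : K :=
  ∏ i ∈ Finset.range ℓ, (x + (i : K))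

/-- The truncated Gaussian hypergeometric series
`G^(d)(a,b,c | z) = Σ_{ℓ=0}^d ((a;ℓ)(b;ℓ))/((c;ℓ)(1;ℓ)) z^ℓ`. -/
noncomputable def Gtrunc {K : Type*} [Field K] (d : ℕ) (a b c z : K) : K :=
  ∑ ℓ ∈ Finset.range (d + 1),
    poch a ℓ * poch b ℓ / (poch c ℓ * poch 1 ℓ) * z ^ ℓ

lemma poch_succ {K : Type*} [Field K] (x : K) (k : ℕ) :
    poch x (k + 1) = poch x k * (x + k) := by
  simp [poch, Finset.prod_range_succ]

lemma poch_nat_cast {K : Type*} [Field K] (n k : ℕ) :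
    poch ((n : K)) k = (n.ascFactorial k : K) := by
  induction k with
  | zero => simp [poch]
  | succ k ih => rw [poch_succ, ih, Nat.ascFactorial_succ]; push_cast; ring

lemma poch_one_eq {K : Type*} [Field K] (k : ℕ) :
    poch (1 : K) k = (k.factorial : K) := by
  have := poch_nat_cast (K := K) 1 k
  simpa [Nat.one_ascFactorial] using this

lemma poch_neg_nat_cast {K : Type*} [Field K] (n k : ℕ) :
    poch (-(n : K)) k = (-1) ^ k * (n.descFactorial k : K) := by
  induction k with
  | zero => simp [poch]
  | succ k ih =>
    rw [poch_succ, ih, Nat.descFactorial_succ]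
    by_cases hk : k ≤ n
    · have : -(n : K) + k = -(((n - k : ℕ) : K)) := by
        push_cast [hk]; ring
      rw [this]; push_cast; ring
    · have h1 : n.descFactorial k = 0 := Nat.descFactorial_eq_zero_iff_lt.mpr (by omega)
      have h2 : n - k = 0 := by omega
      rw [h1, h2]; push_cast; ring

lemma key_nat (a d e k : ℕ) (hk : k ≤ d) (hda : d ≤ a) (he : e + d = a) :
    a.choose (d - k) * a.choose k * ((e + 1).ascFactorial k * k.factorial) =
      a.choose d * (a.descFactorial k * d.descFactorial k) := by
  have hM : 0 < e.factorial * ((a - k).factorial * (d - k).factorial) := by positivity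
  apply Nat.eq_of_mul_eq_mul_right hM
  have h1 : a.choose (d - k) * (d - k).factorial * (a - (d - k)).factorial = a.factorial :=
    Nat.choose_mul_factorial_mul_factorial (by omega)
  have h2 : a.choose k * k.factorial * (a - k).factorial = a.factorial :=
    Nat.choose_mul_factorial_mul_factorial (by omega)
  have h3 : a.choose d * d.factorial * (a - d).factorial = a.factorial :=
    Nat.choose_mul_factorial_mul_factorial hda
  have h4 : (a - k).factorial * a.descFactorial k = a.factorial :=
    Nat.factorial_mul_descFactorial (by omega)
  have h5 : (d - k).factorial * d.descFactorial k = d.factorial :=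
    Nat.factorial_mul_descFactorial hk
  have h6 : e.factorial * (e + 1).ascFactorial k = (e + k).factorial :=
    Nat.factorial_mul_ascFactorial e k
  have hek : a - (d - k) = e + k := by omega
  have had : a - d = e := by omega
  calc a.choose (d - k) * a.choose k * ((e + 1).ascFactorial k * k.factorial) *
        (e.factorial * ((a - k).factorial * (d - k).factorial))
      = (a.choose (d - k) * (d - k).factorial * (e.factorial * (e + 1).ascFactorial k)) *
        (a.choose k * k.factorial * (a - k).factorial) := by ring
    _ = a.factorial * a.factorial := by rw [h6, h2, ← hek, h1]
    _ = a.choose d * (a.descFactorial k * d.descFactorial k) *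
        (e.factorial * ((a - k).factorial * (d - k).factorial)) := by
        have hR : a.choose d * (a.descFactorial k * d.descFactorial k) *
            (e.factorial * ((a - k).factorial * (d - k).factorial)) =
            a.factorial * a.factorial := by
          calc a.choose d * (a.descFactorial k * d.descFactorial k) *
              (e.factorial * ((a - k).factorial * (d - k).factorial))
              = a.choose d * ((a - k).factorial * a.descFactorial k) *
                ((d - k).factorial * d.descFactorial k) * e.factorial := by ring
            _ = a.choose d * a.factorial * d.factorial * e.factorial := by rw [h4, h5]
            _ = (a.choose d * d.factorial * (a - d).factorial) * a.factorial := by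
                rw [had]; ring
            _ = a.factorial * a.factorial := by rw [h3]
        exact hR.symm

theorem sum_choose_eq_hypergeometric_of_gt
    (K : Type*) [Field K] (p : ℕ) (hp : p.Prime) [CharP K p]
    (a b : ℕ) (hab : a < b) (hb2a : b ≤ 2 * a) (hap : a < p) (lam : K) :
    ∑ ℓ ∈ Finset.Icc (b - a) a,
        (Nat.choose a ℓ : K) * (Nat.choose a (b - ℓ) : K) * lam ^ (a + ℓ - b) =
      (Nat.choose a (2 * a - b) : K) *
        Gtrunc (2 * a - b) (-(a : K)) ((b : K) - 2 * (a : K)) (1 + (b : K) - (a : K)) lam := by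
  set d := 2 * a - b with hd
  set e := b - a with he
  have hed : e + d = a := by omega
  have hfac_ne : ∀ m : ℕ, m ≤ a → ((m.factorial : ℕ) : K) ≠ 0 := by
    intro m hm h
    rw [CharP.cast_eq_zero_iff K p] at h
    have := (Nat.Prime.dvd_factorial hp).mp h
    omega
  -- reindex LHS
  rw [← Finset.Ico_add_one_right_eq_Icc, Finset.sum_Ico_eq_sum_range]
  have hrange : a + 1 - e = d + 1 := by omega
  rw [hrange, Gtrunc, Finset.mul_sum]
  apply Finset.sum_congr rfl
  intro k hk
  rw [Finset.mem_range] at hk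
  have hkd : k ≤ d := by omega
  -- index simplifications
  have h1 : a + (e + k) - b = k := by omega
  have h2 : b - (e + k) = a - k := by omega
  have h3 : e + k = a - (d - k) := by omega
  rw [h1, h2, h3, Nat.choose_symm (by omega), Nat.choose_symm (show k ≤ a by omega)]
  -- rewrite poch arguments as casts
  have hb2 : (b : K) - 2 * (a : K) = -((d : K)) := by
    have : ((d : ℕ) : K) = ((2 * a : ℕ) : K) - (b : K) := by
      rw [hd]; push_cast [Nat.cast_sub hb2a]; ring
    rw [this]; push_cast; ring
  have hc : 1 + (b : K) - (a : K) = (((e + 1 : ℕ)) : K) := by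
    push_cast [he, Nat.cast_sub hab.le]; ring
  rw [hb2, hc, poch_neg_nat_cast, poch_neg_nat_cast, poch_nat_cast, poch_one_eq]
  have hasc_ne : (((e + 1).ascFactorial k : ℕ) : K) ≠ 0 := by
    intro h
    have h6 : (e.factorial : K) * ((e + 1).ascFactorial k : K) = ((e + k).factorial : K) := by
      exact_mod_cast congrArg (Nat.cast : ℕ → K) (Nat.factorial_mul_ascFactorial e k)
    rw [h, mul_zero] at h6
    exact hfac_ne (e + k) (by omega) h6.symm
  have hkfac_ne : ((k.factorial : ℕ) : K) ≠ 0 := hfac_ne k (by omega)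
  have hkey : ((a.choose (d - k) * a.choose k * ((e + 1).ascFactorial k * k.factorial) : ℕ) : K)
      = ((a.choose d * (a.descFactorial k * d.descFactorial k) : ℕ) : K) := by
    exact_mod_cast congrArg (Nat.cast : ℕ → K) (key_nat a d e k hkd (by omega) hed)
  push_cast at hkey
  have hsq : ((-1 : K) ^ k) * ((-1 : K) ^ k) = 1 := by
    rw [← pow_add, ← two_mul, pow_mul]; norm_num
  field_simp
  linear_combination lam ^ k * hkey -
    ((a.choose d : K) * (a.descFactorial k : K) * (d.descFactorial k : K) * lam ^ k) * hsq
end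

section
/- Let p > 13 be a prime with p ≡ 4 (mod 5), and let G(λ) := G^{((3p-7)/10)}(3/5, 7/10, 11/10 | λ) over F_p. Then the coefficient of λ^{(3p-7)/10} in G(λ) is nonzero in F_p; in particular, deg G = (3p-7)/10. -/
/-- The truncated Gaussian hypergeometric series `G^(d)(a,b,c | z)` as a
polynomial in `z`: `Σ_{ℓ=0}^d ((a;ℓ)(b;ℓ))/((c;ℓ)(1;ℓ)) z^ℓ`. -/
noncomputable def Gpoly {K : Type*} [Field K] (d : ℕ) (a b c : K) : Polynomial K :=
  ∑ ℓ ∈ Finset.range (d + 1),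
    Polynomial.C (poch a ℓ * poch b ℓ / (poch c ℓ * poch 1 ℓ)) * Polynomial.X ^ ℓ



lemma coeff_Gpoly {K : Type*} [Field K] (d : ℕ) (a b c : K) :
    (Gpoly d a b c).coeff d = poch a d * poch b d / (poch c d * poch 1 d) := by
  rw [Gpoly, Polynomial.finset_sum_coeff]
  simp only [Polynomial.coeff_C_mul, Polynomial.coeff_X_pow]
  rw [Finset.sum_eq_single d]
  · simp
  · intro ℓ hℓ hℓd
    rw [if_neg (by omega), mul_zero]
  · intro h; exact absurd (Finset.self_mem_range_succ d) h

lemma natDegree_Gpoly_le {K : Type*} [Field K] (d : ℕ) (a b c : K) :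
    (Gpoly d a b c).natDegree ≤ d := by
  apply Polynomial.natDegree_sum_le_of_forall_le
  intro ℓ hℓ
  simp only [Finset.mem_range] at hℓ
  calc (Polynomial.C _ * Polynomial.X ^ ℓ).natDegree ≤ ℓ := by
        apply le_trans (Polynomial.natDegree_mul_le)
        simp
    _ ≤ d := by omega

lemma dvd_small {p n : ℕ} (h : p ∣ n) (h3 : n < 3 * p) (hp : 0 < p) :
    n = 0 ∨ n = p ∨ n = 2 * p := by
  obtain ⟨k, rfl⟩ := h
  have hk : k < 3 := by
    by_contra hk
    push_neg at hk
    have : p * 3 ≤ p * k := Nat.mul_le_mul_left p hk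
    omega
  interval_cases k <;> omega

theorem Gpoly_leadingCoeff_ne_zero_and_degree
    (p : ℕ) [Fact p.Prime] (hp13 : 13 < p) (hp5 : p % 5 = 4) :
    (Gpoly ((3 * p - 7) / 10) ((3 : ZMod p) / 5) ((7 : ZMod p) / 10)
        ((11 : ZMod p) / 10)).coeff ((3 * p - 7) / 10) ≠ 0 ∧
      (Gpoly ((3 * p - 7) / 10) ((3 : ZMod p) / 5) ((7 : ZMod p) / 10)
        ((11 : ZMod p) / 10)).natDegree = (3 * p - 7) / 10 := by
  have hp : p.Prime := Fact.out
  have hp2 : p % 2 = 1 := (Nat.Prime.eq_two_or_odd hp).resolve_left (by omega)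
  have hp10 : p % 10 = 9 := by omega
  set d := (3 * p - 7) / 10 with hd
  have hd10 : 10 * d = 3 * p - 7 := by omega
  -- generic nonvanishing of a factor num/den + i
  have key : ∀ (num den : ℕ) (i : ℕ), (den : ZMod p) ≠ 0 → ¬ p ∣ (num + den * i) →
      (num : ZMod p) / den + i ≠ 0 := by
    intro num den i hden hnd h
    apply hnd
    rw [← ZMod.natCast_eq_zero_iff]
    push_cast
    have : ((num : ZMod p) / den + i) * den = 0 := by rw [h, zero_mul]
    rw [add_mul, div_mul_cancel₀ _ hden] at this
    linear_combination this
  have h5 : (5 : ZMod p) ≠ 0 := by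
    rw [show ((5:ZMod p)) = ((5:ℕ):ZMod p) by norm_cast, Ne,
      ZMod.natCast_eq_zero_iff]
    intro h; have := Nat.le_of_dvd (by norm_num) h; omega
  have h10 : (10 : ZMod p) ≠ 0 := by
    rw [show ((10:ZMod p)) = ((10:ℕ):ZMod p) by norm_cast, Ne,
      ZMod.natCast_eq_zero_iff]
    intro h; have := Nat.le_of_dvd (by norm_num) h; omega
  have h1 : ((1:ℕ) : ZMod p) ≠ 0 := by push_cast; exact one_ne_zero
  have ha : poch ((3 : ZMod p) / 5) d ≠ 0 := by
    rw [poch, Finset.prod_ne_zero_iff]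
    intro i hi
    simp only [Finset.mem_range] at hi
    exact key 3 5 i h5 (fun h => by
      rcases dvd_small h (by omega) (by omega) with h' | h' | h' <;> omega)
  have hb : poch ((7 : ZMod p) / 10) d ≠ 0 := by
    rw [poch, Finset.prod_ne_zero_iff]
    intro i hi
    simp only [Finset.mem_range] at hi
    exact key 7 10 i h10 (fun h => by
      rcases dvd_small h (by omega) (by omega) with h' | h' | h' <;> omega)
  have hc : poch ((11 : ZMod p) / 10) d ≠ 0 := by
    rw [poch, Finset.prod_ne_zero_iff]
    intro i hi
    simp only [Finset.mem_range] at hi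
    exact key 11 10 i h10 (fun h => by
      rcases dvd_small h (by omega) (by omega) with h' | h' | h' <;> omega)
  have hone : poch (1 : ZMod p) d ≠ 0 := by
    rw [poch, Finset.prod_ne_zero_iff]
    intro i hi
    simp only [Finset.mem_range] at hi
    have h := key 1 1 i h1 (fun h => by
      rcases dvd_small h (by omega) (by omega) with h' | h' | h' <;> omega)
    push_cast at h
    simpa using h
  have hco : (Gpoly d ((3 : ZMod p) / 5) ((7 : ZMod p) / 10)
      ((11 : ZMod p) / 10)).coeff d ≠ 0 := by
    rw [coeff_Gpoly]
    exact div_ne_zero (mul_ne_zero ha hb) (mul_ne_zero hc hone)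
  exact ⟨hco, le_antisymm (natDegree_Gpoly_le _ _ _ _)
    (Polynomial.le_natDegree_of_ne_zero hco)⟩
end

section
/- Let p > 13 be a prime with p ≡ 4 (mod 5). The polynomial G(λ) := G^{((3p-7)/10)}(3/5, 7/10, 11/10 | λ) satisfies the differential equation 50λ(1-λ)G''(λ) + 5(11-23λ)G'(λ) - 21G(λ) = 0 as polynomials over F_p. -/
open Polynomial in
lemma coeff_X_mul' {K : Type*} [Semiring K] (P : Polynomial K) (n : ℕ) :
    (X * P).coeff n = if n = 0 then 0 else P.coeff (n - 1) := by
  cases n with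
  | zero => simp
  | succ m => simp [Polynomial.coeff_X_mul]

open Polynomial in
lemma coeff_X2_mul' {K : Type*} [Semiring K] (P : Polynomial K) (n : ℕ) :
    (X ^ 2 * P).coeff n = if n < 2 then 0 else P.coeff (n - 2) := by
  match n with
  | 0 => simp [Polynomial.mul_coeff_zero, Polynomial.coeff_X_pow]
  | 1 => rw [pow_two, mul_assoc]; simp [coeff_X_mul']
  | (m + 2) => simpa using Polynomial.coeff_X_pow_mul P 2 m

open Polynomial in
lemma ode_coeff {K : Type*} [Field K] (G : Polynomial K) (n : ℕ) :
    ((50 : Polynomial K) * (X * (1 - X)) * derivative (derivative G) +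
      (5 : Polynomial K) * (11 - 23 * X) * derivative G - 21 * G).coeff n
    = 5 * ((n : K) + 1) * (10 * (n : K) + 11) * G.coeff (n + 1)
      - (10 * (n : K) + 7) * (5 * (n : K) + 3) * G.coeff n := by
  have h : (50 : Polynomial K) * (X * (1 - X)) * derivative (derivative G) +
      (5 : Polynomial K) * (11 - 23 * X) * derivative G - 21 * G
      = C 50 * (X * derivative (derivative G)) - C 50 * (X ^ 2 * derivative (derivative G))
        + C 5 * C 11 * derivative G - C 5 * C 23 * (X * derivative G) - C 21 * G := by
    rw [show (50 : Polynomial K) = C 50 from (map_ofNat C 50).symm,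
      show (5 : Polynomial K) = C 5 from (map_ofNat C 5).symm,
      show (11 : Polynomial K) = C 11 from (map_ofNat C 11).symm,
      show (23 : Polynomial K) = C 23 from (map_ofNat C 23).symm,
      show (21 : Polynomial K) = C 21 from (map_ofNat C 21).symm]
    ring
  rw [h]
  simp only [coeff_sub, coeff_add, coeff_C_mul, mul_assoc, coeff_X_mul', coeff_X2_mul',
    coeff_derivative]
  match n with
  | 0 => norm_num; ring
  | 1 => norm_num; ring
  | (m + 2) =>
    norm_num
    push_cast
    ring

theorem Gpoly_hypergeometric_ODE
    (p : ℕ) [Fact p.Prime] (hp13 : 13 < p) (hp5 : p % 5 = 4) :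
    (50 : Polynomial (ZMod p)) * (Polynomial.X * (1 - Polynomial.X)) *
        Polynomial.derivative (Polynomial.derivative
          (Gpoly ((3 * p - 7) / 10) ((3 : ZMod p) / 5) ((7 : ZMod p) / 10)
            ((11 : ZMod p) / 10))) +
      (5 : Polynomial (ZMod p)) * (11 - 23 * Polynomial.X) *
        Polynomial.derivative
          (Gpoly ((3 * p - 7) / 10) ((3 : ZMod p) / 5) ((7 : ZMod p) / 10)
            ((11 : ZMod p) / 10)) -
      (21 : Polynomial (ZMod p)) *
        Gpoly ((3 * p - 7) / 10) ((3 : ZMod p) / 5) ((7 : ZMod p) / 10)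
          ((11 : ZMod p) / 10) = 0 := by
  have hprime : p.Prime := Fact.out
  have hp2 : p % 2 = 1 := Nat.odd_iff.mp (hprime.odd_of_ne_two (by omega))
  have hp10 : p % 10 = 9 := by omega
  set d : ℕ := (3 * p - 7) / 10 with hd
  have hdd : 10 * d = 3 * p - 7 := by omega
  have hcast : ∀ m : ℕ, 0 < m → ¬ (p ∣ m) → ((m : ZMod p) ≠ 0) := by
    intro m hm hdvd
    rw [Ne, ZMod.natCast_eq_zero_iff]
    exact hdvd
  have h5 : (5 : ZMod p) ≠ 0 := by
    have := hcast 5 (by norm_num) (by intro h; have := Nat.le_of_dvd (by norm_num) h; omega)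
    simpa using this
  have h10 : (10 : ZMod p) ≠ 0 := by
    have := hcast 10 (by norm_num) (by intro h; have := Nat.le_of_dvd (by norm_num) h; omega)
    simpa using this
  set a : ZMod p := (3 : ZMod p) / 5 with ha
  set b : ZMod p := (7 : ZMod p) / 10 with hb
  set c : ZMod p := (11 : ZMod p) / 10 with hc
  set g : ℕ → ZMod p := fun ℓ => poch a ℓ * poch b ℓ / (poch c ℓ * poch 1 ℓ) with hg
  have hpoch1 : ∀ ℓ : ℕ, ℓ ≤ d → poch (1 : ZMod p) ℓ ≠ 0 := by
    intro ℓ hℓ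
    rw [poch]
    refine Finset.prod_ne_zero_iff.mpr ?_
    intro i hi
    rw [Finset.mem_range] at hi
    have h1 : ((1 : ZMod p) + i) = ((1 + i : ℕ) : ZMod p) := by push_cast; ring
    rw [h1]
    apply hcast _ (by omega)
    intro h
    have := Nat.le_of_dvd (by omega) h
    omega
  have hpochc : ∀ ℓ : ℕ, ℓ ≤ d → poch c ℓ ≠ 0 := by
    intro ℓ hℓ
    rw [poch]
    refine Finset.prod_ne_zero_iff.mpr ?_
    intro i hi
    rw [Finset.mem_range] at hi
    intro hzero
    have h0 : ((11 + 10 * i : ℕ) : ZMod p) = 0 := by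
      have h1 : ((11 + 10 * i : ℕ) : ZMod p) = 10 * (c + i) := by
        rw [hc]; push_cast; field_simp
      rw [h1, hzero, mul_zero]
    have hdvd : p ∣ 11 + 10 * i := by
      rwa [ZMod.natCast_eq_zero_iff] at h0
    obtain ⟨k, hk⟩ := hdvd
    have hik : i < d := by omega
    have hlt : 11 + 10 * i < 3 * p := by omega
    have hk3 : k < 3 := by nlinarith
    interval_cases k <;> omega
  have hcoeff : ∀ n : ℕ, (Gpoly d a b c).coeff n = if n ≤ d then g n else 0 := by
    intro n
    rw [Gpoly, Polynomial.finset_sum_coeff]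
    simp only [Polynomial.coeff_C_mul, Polynomial.coeff_X_pow, mul_ite, mul_one, mul_zero]
    rw [Finset.sum_ite_eq]
    simp [Finset.mem_range, Nat.lt_succ_iff, hg]
  have hrec : ∀ n : ℕ, n + 1 ≤ d →
      5 * ((n : ZMod p) + 1) * (10 * (n : ZMod p) + 11) * g (n + 1)
        = (10 * (n : ZMod p) + 7) * (5 * (n : ZMod p) + 3) * g n := by
    intro n hn
    have hsucc : ∀ x : ZMod p, poch x (n + 1) = poch x n * (x + n) := by
      intro x; rw [poch, poch, Finset.prod_range_succ]
    have hcn : c + n ≠ 0 := by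
      intro hz
      have h0 : poch c (n + 1) = 0 := by rw [hsucc, hz, mul_zero]
      exact hpochc (n + 1) hn h0
    have h1n : (1 : ZMod p) + n ≠ 0 := by
      intro hz
      have h0 : poch (1 : ZMod p) (n + 1) = 0 := by rw [hsucc, hz, mul_zero]
      exact hpoch1 (n + 1) hn h0
    have hgrec : g (n + 1) = g n * ((a + n) * (b + n) / ((c + n) * (1 + n))) := by
      rw [hg]
      simp only
      rw [hsucc, hsucc, hsucc, hsucc, div_mul_div_comm]
      congr 1 <;> ring
    rw [hc] at hcn
    have hr : 5 * ((n : ZMod p) + 1) * (10 * (n : ZMod p) + 11)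
          * ((a + n) * (b + n) / ((c + n) * (1 + n)))
        = (10 * (n : ZMod p) + 7) * (5 * (n : ZMod p) + 3) := by
      rw [ha, hb, hc]
      have he : 5 * ((n : ZMod p) + 1) * (10 * (n : ZMod p) + 11)
            * ((3 / 5 + (n : ZMod p)) * (7 / 10 + (n : ZMod p))
              / ((11 / 10 + (n : ZMod p)) * (1 + (n : ZMod p))))
          = (5 * ((n : ZMod p) + 1) * (10 * (n : ZMod p) + 11)
              * ((3 / 5 + (n : ZMod p)) * (7 / 10 + (n : ZMod p))))
            / ((11 / 10 + (n : ZMod p)) * (1 + (n : ZMod p))) := by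
        ring
      rw [he, div_eq_iff (mul_ne_zero hcn h1n)]
      field_simp
      ring
    rw [hgrec, ← hr]
    ring
  apply Polynomial.ext
  intro n
  rw [Polynomial.coeff_zero, ode_coeff, hcoeff, hcoeff]
  rcases lt_trichotomy n d with h | h | h
  · rw [if_pos (by omega), if_pos (by omega), sub_eq_zero]
    have hr := hrec n (by omega)
    push_cast at hr ⊢
    exact hr
  · rw [if_neg (by omega), if_pos (by omega), mul_zero, zero_sub, neg_eq_zero]
    have h7 : 10 * (n : ZMod p) + 7 = 0 := by
      have h1 : ((10 * n + 7 : ℕ) : ZMod p) = ((3 * p : ℕ) : ZMod p) := by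
        rw [show 10 * n + 7 = 3 * p by omega]
      have h0 : (p : ZMod p) = 0 := ZMod.natCast_self p
      push_cast at h1
      rw [h1, h0, mul_zero]
    rw [h7, zero_mul, zero_mul]
  · rw [if_neg (by omega), if_neg (by omega), mul_zero, mul_zero, sub_zero]
end

section
/- Fix n ≥ 2, m ≥ 3 and a prime p with p ≡ -1 (mod (m-1)n). Then there is no 4-tuple of integers (i,j,h,k) with 1 ≤ i,j < n, n | (ip - j), 1 ≤ h < mi/n, 1 ≤ k < mj/n, (m-1) | (hp - k - (ip-j)/n), and 0 ≤ hp - k - (ip-j)/n ≤ (m-1)(ip-j)/n. -/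
theorem S_empty_of_neg_one_mod
    (n m : ℕ) (hn : 2 ≤ n) (hm : 3 ≤ m)
    (p : ℕ) (hp : p.Prime) (hmod : (p : ℤ) ≡ -1 [ZMOD ((m - 1) * n)]) :
    ¬ ∃ i j h k : ℤ,
        1 ≤ i ∧ i < n ∧ 1 ≤ j ∧ j < n ∧ (n : ℤ) ∣ (i * p - j) ∧
        1 ≤ h ∧ h * n < m * i ∧ 1 ≤ k ∧ k * n < m * j ∧
        ((m : ℤ) - 1) ∣ (h * p - k - (i * p - j) / n) ∧
        0 ≤ h * p - k - (i * p - j) / n ∧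
        h * p - k - (i * p - j) / n ≤ ((m : ℤ) - 1) * ((i * p - j) / n) := by
  rintro ⟨i, j, h, k, hi1, hin, hj1, hjn, hdvd, hh1, hhm, hk1, hkm, hdvd2, _, _⟩
  have hn2 : (2:ℤ) ≤ (n:ℤ) := by exact_mod_cast hn
  have hm3 : (3:ℤ) ≤ (m:ℤ) := by exact_mod_cast hm
  have hn0 : (n:ℤ) ≠ 0 := by linarith
  -- (m-1)*n divides p+1
  have hpp : ((m:ℤ) - 1) * n ∣ (p:ℤ) + 1 := by
    have h1 := hmod.dvd
    have : (-1 : ℤ) - p = -((p:ℤ) + 1) := by ring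
    rw [this, dvd_neg] at h1
    exact h1
  have hnp : (n:ℤ) ∣ (p:ℤ) + 1 := dvd_trans (dvd_mul_left _ _) hpp
  have hmp : ((m:ℤ) - 1) ∣ (p:ℤ) + 1 := dvd_trans (dvd_mul_right _ _) hpp
  -- n ∣ i + j, hence i + j = n
  have hij : (n:ℤ) ∣ i + j := by
    have h2 : (n:ℤ) ∣ i * ((p:ℤ) + 1) := Dvd.dvd.mul_left hnp i
    have h3 : i + j = i * ((p:ℤ) + 1) - (i * p - j) := by ring
    rw [h3]
    exact dvd_sub h2 hdvd
  have hijn : i + j = n := by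
    have h4 : (n:ℤ) ∣ (i + j - n) := dvd_sub hij dvd_rfl
    have h5 : i + j - n = 0 := by
      rcases h4 with ⟨c, hc⟩
      rcases lt_trichotomy c 0 with hc0 | hc0 | hc0
      · nlinarith
      · simp [hc0] at hc; linarith
      · nlinarith
    linarith
  -- q = (i*p - j)/n
  obtain ⟨q, hq⟩ := hdvd
  have hqdiv : (i * p - j) / (n:ℤ) = q := by
    rw [hq]; exact Int.mul_ediv_cancel_left q hn0
  rw [hqdiv] at hdvd2
  -- (m-1) ∣ q + 1
  have hq1 : ((m:ℤ) - 1) ∣ q + 1 := by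
    have h6 : i * ((p:ℤ) + 1) = (n:ℤ) * (q + 1) := by
      have : j = (n:ℤ) - i := by linarith
      rw [this] at hq; linarith [hq]
    have h7 : ((m:ℤ) - 1) * n ∣ (n:ℤ) * (q + 1) := by
      rw [← h6]; exact Dvd.dvd.mul_left hpp i
    rcases h7 with ⟨d, hd⟩
    refine ⟨d, mul_left_cancel₀ hn0 ?_⟩
    rw [hd]; ring
  -- (m-1) ∣ h + k - 1
  have hhk : ((m:ℤ) - 1) ∣ h + k - 1 := by
    have h8 : h + k - 1 = h * ((p:ℤ) + 1) - (q + 1) - (h * p - k - q) := by ring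
    rw [h8]
    exact dvd_sub (dvd_sub (Dvd.dvd.mul_left hmp h) hq1) hdvd2
  -- bounds: 1 ≤ h + k - 1 < m - 1
  have hpos : (1:ℤ) ≤ h + k - 1 := by linarith
  have hub : h + k - 1 < (m:ℤ) - 1 := by
    have h9 : (h + k) * n < (m:ℤ) * n := by
      have : (m:ℤ) * i + m * j = m * n := by rw [← hijn]; ring
      nlinarith
    have h10 : h + k < (m:ℤ) := lt_of_mul_lt_mul_right h9 (by linarith)
    linarith
  have := Int.le_of_dvd (by linarith) hhk
  linarith
end

section
/- Fix n ≥ 2 and m ≥ 3 such that n divides m + 1, and a prime p with p ≡ m (mod (m-1)n). Then there is no 4-tuple of integers (i,j,h,k) with 1 ≤ i,j < n, n | (ip - j), 1 ≤ h < mi/n, 1 ≤ k < mj/n, (m-1) | (hp - k - (ip-j)/n), and 0 ≤ hp - k - (ip-j)/n ≤ (m-1)(ip-j)/n. -/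
set_option maxHeartbeats 1000000 in
theorem S_empty_of_m_mod
    (n m : ℕ) (hn : 2 ≤ n) (hm : 3 ≤ m) (hnm : n ∣ (m + 1))
    (p : ℕ) (hp : p.Prime) (hmod : (p : ℤ) ≡ (m : ℤ) [ZMOD ((m - 1) * n)]) :
    ¬ ∃ i j h k : ℤ,
        1 ≤ i ∧ i < n ∧ 1 ≤ j ∧ j < n ∧ (n : ℤ) ∣ (i * p - j) ∧
        1 ≤ h ∧ h * n < m * i ∧ 1 ≤ k ∧ k * n < m * j ∧
        ((m : ℤ) - 1) ∣ (h * p - k - (i * p - j) / n) ∧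
        0 ≤ h * p - k - (i * p - j) / n ∧
        h * p - k - (i * p - j) / n ≤ ((m : ℤ) - 1) * ((i * p - j) / n) := by
  rintro ⟨i, j, h, k, hi1, hin, hj1, hjn, hdvd, hh1, hhn, hk1, hkn, hdvdm, hlow, hhigh⟩
  have hnpos : (0:ℤ) < n := by exact_mod_cast Nat.lt_of_lt_of_le Nat.zero_lt_two hn
  have hnZ : (2:ℤ) ≤ n := by exact_mod_cast hn
  have hmZ : (3:ℤ) ≤ m := by exact_mod_cast hm
  -- p = m - (m-1)*n*s for some integer s
  obtain ⟨s, hs⟩ : ((m:ℤ) - 1) * n ∣ (m : ℤ) - p := hmod.dvd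
  have hps : (p:ℤ) = m - ((m:ℤ) - 1) * n * s := by linarith
  -- m + 1 = n * c
  obtain ⟨c, hc⟩ := hnm
  have hcZ : (m:ℤ) + 1 = n * c := by exact_mod_cast hc
  -- i + j = n
  obtain ⟨a, ha⟩ := hdvd
  have hij : i + j = n := by
    have hd : (n:ℤ) ∣ i + j := by
      refine ⟨i * c - i * ((m:ℤ) - 1) * s - a, ?_⟩
      linear_combination -ha + i * hps + i * hcZ
    obtain ⟨t, ht⟩ := hd
    have h1 : (0:ℤ) < n * t := by rw [← ht]; linarith
    have h2 : (n:ℤ) * t < n * 2 := by rw [← ht]; linarith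
    have ht1 : t = 1 := by
      have hpos : 0 < t := by
        by_contra hcon
        push_neg at hcon
        nlinarith
      have hle : t < 2 := by
        by_contra hcon
        push_neg at hcon
        nlinarith
      omega
    rw [ht, ht1, mul_one]
  -- identify the quotient
  have hq : (i * p - j) / (n:ℤ) = a := by
    rw [ha, Int.mul_ediv_cancel_left _ (ne_of_gt hnpos)]
  -- a = i*c - 1 - i*(m-1)*s
  have haval : a = i * c - 1 - i * ((m:ℤ) - 1) * s := by
    have h' : (n:ℤ) * a = n * (i * c - 1 - i * ((m:ℤ) - 1) * s) := by
      linear_combination -ha + i * hps + i * hcZ - hij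
    exact mul_left_cancel₀ (ne_of_gt hnpos) h'
  rw [hq] at hdvdm hlow hhigh
  -- divisibility of D = h - k + 1 - i*c by m - 1
  obtain ⟨u, hu⟩ := hdvdm
  have hD : h - k + 1 - i * c = ((m:ℤ) - 1) * (u - h + h * n * s - i * s) := by
    linear_combination hu - h * hps + haval
  -- bounds: 1 - m < D < 0
  have hnh : (n:ℤ) * h ≤ m * i - 1 := by linarith [hhn]
  have hnk : (n:ℤ) * k ≥ n := by have := mul_le_mul_of_nonneg_left hk1 hnpos.le; linarith
  have hic : (n:ℤ) * (i * c) = i * ((m:ℤ) + 1) := by rw [hcZ]; ring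
  have hup : (n:ℤ) * (h - k + 1 - i * c) ≤ -i - 1 := by
    have e : (n:ℤ) * (h - k + 1 - i * c) = n * h - n * k + n - n * (i * c) := by ring
    rw [e, hic]; linarith
  have hnh' : (n:ℤ) * h ≥ n := by have := mul_le_mul_of_nonneg_left hh1 hnpos.le; linarith
  have hnk' : (n:ℤ) * k ≤ m * ((n:ℤ) - i) - 1 := by
    have hj' : j = (n:ℤ) - i := by linarith
    rw [hj'] at hkn
    linarith
  have hlo : (n:ℤ) * (h - k + 1 - i * c) ≥ 2 * n + 1 - m * n - i := by
    have e : (n:ℤ) * (h - k + 1 - i * c) = n * h - n * k + n - n * (i * c) := by ring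
    rw [e, hic]; nlinarith [hnk']
  have hDneg : h - k + 1 - i * c < 0 := by
    by_contra hcon
    push_neg at hcon
    have := mul_nonneg hnpos.le hcon
    linarith
  have hDgt : (1:ℤ) - m < h - k + 1 - i * c := by
    by_contra hcon
    push_neg at hcon
    have h2 := mul_le_mul_of_nonneg_left hcon hnpos.le
    have e2 : (n:ℤ) * (1 - m) = n - n * m := by ring
    linarith [hlo, hin, h2]
  -- contradiction
  have hvneg : u - h + h * n * s - i * s < 0 := by
    by_contra hcon
    push_neg at hcon
    have := mul_nonneg (by linarith : (0:ℤ) ≤ (m:ℤ) - 1) hcon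
    linarith [hD, hDneg]
  have hvle : u - h + h * n * s - i * s ≤ -1 := by omega
  have hfin := mul_le_mul_of_nonneg_left hvle (by linarith : (0:ℤ) ≤ (m:ℤ) - 1)
  linarith [hD, hDgt, hfin]
end
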